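/- The product of two homomorphisms of indexed pip-spaces is always defined and is again a homomorphism; moreover A is a homomorphism from V_I to Y_K if and only if A^× is a homomorphism from Y_K to V_I. -/

import Mathlib

/-- An operator `A` between indexed pip-spaces is a homomorphism: for every `r` there is
`u` such that both representatives `A_{ur} : V_r → Y_u` and `A_{ū r̄} : V_r̄ → Y_ū` exist,
and conversely for every `u` there is such an `r`. -/
def IsHomo {V Y : Type*} [AddCommGroup V] [Module ℂ V] [AddCommGroup Y] [Module ℂ Y]
    {I K : Type*} (VI : I → Submodule ℂ V) (YK : K → Submodule ℂ Y)
    (barI : I → I) (barK : K → K) (A : V →ₗ[ℂ] Y) : Prop :=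
  (∀ r : I, ∃ u : K, Set.MapsTo A (VI r : Set V) (YK u : Set Y) ∧
      Set.MapsTo A (VI (barI r) : Set V) (YK (barK u) : Set Y)) ∧
  (∀ u : K, ∃ r : I, Set.MapsTo A (VI r : Set V) (YK u : Set Y) ∧
      Set.MapsTo A (VI (barI r) : Set V) (YK (barK u) : Set Y))

open Set

section IsHomo

variable {V Y Z : Type*} [AddCommGroup V] [Module ℂ V] [AddCommGroup Y] [Module ℂ Y]
  [AddCommGroup Z] [Module ℂ Z] {I K L : Type*}
  {VI : I → Submodule ℂ V} {YK : K → Submodule ℂ Y} {ZL : L → Submodule ℂ Z}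
  {barI : I → I} {barK : K → K} {barL : L → L}

theorem IsHomo.exists_factorization [Nonempty I] {A : V →ₗ[ℂ] Y} {B : Y →ₗ[ℂ] Z}
    (hA : IsHomo VI YK barI barK A) (hB : IsHomo YK ZL barK barL B) :
    ∃ t : K, (∃ r : I, MapsTo A (VI r : Set V) (YK t : Set Y)) ∧
      ∃ l : L, MapsTo B (YK t : Set Y) (ZL l : Set Z) := by
  obtain ⟨r⟩ := ‹Nonempty I›
  obtain ⟨t, hrt, -⟩ := hA.1 r
  obtain ⟨l, htl, -⟩ := hB.1 t
  exact ⟨t, ⟨r, hrt⟩, l, htl⟩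

theorem IsHomo.comp {A : V →ₗ[ℂ] Y} {B : Y →ₗ[ℂ] Z}
    (hA : IsHomo VI YK barI barK A) (hB : IsHomo YK ZL barK barL B) :
    IsHomo VI ZL barI barL (B.comp A) := by
  constructor
  · intro r
    obtain ⟨u, hru, hru'⟩ := hA.1 r
    obtain ⟨l, hul, hul'⟩ := hB.1 u
    exact ⟨l, hul.comp hru, hul'.comp hru'⟩
  · intro l
    obtain ⟨u, hul, hul'⟩ := hB.2 l
    obtain ⟨r, hru, hru'⟩ := hA.2 u
    exact ⟨r, hul.comp hru, hul'.comp hru'⟩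

/-- The pair `A_{ur}`, `A_{ū r̄}` of `A` yields the pair `A'_{r̄ ū}`, `A'_{r u}` of `A'`,
using that both bars are involutions. -/
theorem IsHomo.adjoint (hbarI : Function.Involutive barI) (hbarK : Function.Involutive barK)
    {A : V →ₗ[ℂ] Y} {A' : Y →ₗ[ℂ] V}
    (hadj : ∀ r u, MapsTo A (VI r : Set V) (YK u : Set Y) →
      MapsTo A' (YK (barK u) : Set Y) (VI (barI r) : Set V))
    (hA : IsHomo VI YK barI barK A) : IsHomo YK VI barK barI A' := by
  have hadj_bar : ∀ r u, MapsTo A (VI (barI r) : Set V) (YK (barK u) : Set Y) →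
      MapsTo A' (YK u : Set Y) (VI r : Set V) := fun r u h => by
    simpa only [hbarI r, hbarK u] using hadj _ _ h
  constructor
  · intro u
    obtain ⟨r, hru, hru'⟩ := hA.2 u
    exact ⟨r, hadj_bar r u hru', hadj r u hru⟩
  · intro r
    obtain ⟨u, hru, hru'⟩ := hA.1 r
    exact ⟨u, hadj_bar r u hru', hadj r u hru⟩

end IsHomo

/-- The product of two homomorphisms of indexed pip-spaces is always defined (it factors
through an intermediate assaying subspace) and is again a homomorphism; moreover `A` is a
homomorphism iff its adjoint `A^×` is. -/
theorem homo_comp_and_adjoint {V Y Z : Type*}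
    [AddCommGroup V] [Module ℂ V] [AddCommGroup Y] [Module ℂ Y] [AddCommGroup Z] [Module ℂ Z]
    {I K L : Type*} [Nonempty I]
    (VI : I → Submodule ℂ V) (YK : K → Submodule ℂ Y) (ZL : L → Submodule ℂ Z)
    (barI : I → I) (barK : K → K) (barL : L → L)
    (hbarI : ∀ r, barI (barI r) = r) (hbarK : ∀ u, barK (barK u) = u)
    (A : V →ₗ[ℂ] Y) (A' : Y →ₗ[ℂ] V) (B : Y →ₗ[ℂ] Z)
    -- a representative `A_{ur}` exists iff the representative `(A^×)_{r̄ ū}` exists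
    (hadj : ∀ (r : I) (u : K),
      Set.MapsTo A (VI r : Set V) (YK u : Set Y) ↔
        Set.MapsTo A' (YK (barK u) : Set Y) (VI (barI r) : Set V))
    (hA : IsHomo VI YK barI barK A) (hB : IsHomo YK ZL barK barL B) :
    -- the product BA is defined: there is a continuous factorization through some Y_t
    (∃ t : K, (∃ r : I, Set.MapsTo A (VI r : Set V) (YK t : Set Y)) ∧
      (∃ l : L, Set.MapsTo B (YK t : Set Y) (ZL l : Set Z))) ∧
    -- the product is a homomorphism
    IsHomo VI ZL barI barL (B.comp A) ∧
    -- A is a homomorphism iff A^× is a homomorphism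
    (IsHomo VI YK barI barK A ↔ IsHomo YK VI barK barI A') := by
  have hadj_symm : ∀ u r, Set.MapsTo A' (YK u : Set Y) (VI r : Set V) →
      Set.MapsTo A (VI (barI r) : Set V) (YK (barK u) : Set Y) := fun u r h =>
    (hadj (barI r) (barK u)).mpr (by rwa [hbarI, hbarK])
  exact ⟨hA.exists_factorization hB, hA.comp hB,
    ⟨IsHomo.adjoint hbarI hbarK fun r u => (hadj r u).mp,
      IsHomo.adjoint hbarK hbarI hadj_symm⟩⟩
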